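/- For every integer d ≥ 3, the derived subgroup Γ_d' of the Fabrykowski–Gupta group is the normal closure of the commutator [a,r] = r^{−a} r in Γ_d; it is contained in the first level stabilizer Stab_{Γ_d}(1), has index d in Stab_{Γ_d}(1), and Stab_{Γ_d}(1) is the internal semidirect product Γ_d' ⋊ ⟨r⟩. -/

import Mathlib

namespace FG

variable (d : ℕ) [NeZero d]

/-- The rooted-tree automorphism `a` of the `d`-regular rooted tree (vertex set: the free
monoid `{0,…,d-1}^*`), acting by `(x w)^a = ((x+1) mod d) w`. -/
def aFun : List (Fin d) → List (Fin d)
  | [] => []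
  | x :: w => (x + 1) :: w

def aInv : List (Fin d) → List (Fin d)
  | [] => []
  | x :: w => (x - 1) :: w

lemma aInv_aFun : ∀ w, aInv d (aFun d w) = w := by
  intro w; cases w <;> simp [aFun, aInv]

lemma aFun_aInv : ∀ w, aFun d (aInv d w) = w := by
  intro w; cases w <;> simp [aFun, aInv]

def aPerm : Equiv.Perm (List (Fin d)) :=
  ⟨aFun d, aInv d, aInv_aFun d, aFun_aInv d⟩

/-- The rooted-tree automorphism `r`:
`(0 w)^r = 0 w^a`, `(x w)^r = x w` for `1 ≤ x ≤ d-2`, `((d-1) w)^r = (d-1) w^r`. -/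
def rFun : List (Fin d) → List (Fin d)
  | [] => []
  | x :: w => if x = 0 then x :: aFun d w else if x = -1 then x :: rFun w else x :: w

def rInv : List (Fin d) → List (Fin d)
  | [] => []
  | x :: w => if x = 0 then x :: aInv d w else if x = -1 then x :: rInv w else x :: w

lemma rInv_rFun : ∀ w, rInv d (rFun d w) = w := by
  intro w
  induction w with
  | nil => simp [rFun, rInv]
  | cons x w ih =>
    by_cases h0 : x = 0
    · simp [rFun, rInv, h0, aInv_aFun]
    · by_cases h1 : x = -1
      · subst h1
        have hd : ¬ d = 1 := by simpa using h0
        simp [rFun, rInv, hd, ih]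
      · simp [rFun, rInv, h0, h1]

lemma rFun_rInv : ∀ w, rFun d (rInv d w) = w := by
  intro w
  induction w with
  | nil => simp [rFun, rInv]
  | cons x w ih =>
    by_cases h0 : x = 0
    · simp [rFun, rInv, h0, aFun_aInv]
    · by_cases h1 : x = -1
      · subst h1
        have hd : ¬ d = 1 := by simpa using h0
        simp [rFun, rInv, hd, ih]
      · simp [rFun, rInv, h0, h1]

def rPerm : Equiv.Perm (List (Fin d)) :=
  ⟨rFun d, rInv d, rInv_rFun d, rFun_rInv d⟩

/-- The Fabrykowski–Gupta group `Γ_d`, as the subgroup of the permutation group of the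
free monoid `{0,…,d-1}^*` generated by the tree automorphisms `a` and `r`. -/
def Gamma : Subgroup (Equiv.Perm (List (Fin d))) :=
  Subgroup.closure {aPerm d, rPerm d}

/-- The generator `a` as an element of `Γ_d`. -/
def aG : ↥(Gamma d) :=
  ⟨aPerm d, Subgroup.subset_closure (Set.mem_insert _ _)⟩

/-- The generator `r` as an element of `Γ_d`. -/
def rG : ↥(Gamma d) :=
  ⟨rPerm d, Subgroup.subset_closure (Set.mem_insert_iff.mpr (Or.inr rfl))⟩

/-- The `n`-th level stabilizer `Stab_{Γ_d}(n)`: all elements of `Γ_d` fixing every word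
of length `n`. -/
def Stab (n : ℕ) : Subgroup ↥(Gamma d) where
  carrier := { g | ∀ w : List (Fin d), w.length = n → (g : Equiv.Perm (List (Fin d))) w = w }
  one_mem' := by intro w _; rfl
  mul_mem' := by
    intro g h hg hh w hw
    have : ((g * h : ↥(Gamma d)) : Equiv.Perm (List (Fin d))) w
        = (g : Equiv.Perm (List (Fin d))) ((h : Equiv.Perm (List (Fin d))) w) := rfl
    rw [this, hh w hw, hg w hw]
  inv_mem' := by
    intro g hg w hw
    have h1 := hg w hw
    calc ((g⁻¹ : ↥(Gamma d)) : Equiv.Perm (List (Fin d))) w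
        = (g : Equiv.Perm (List (Fin d)))⁻¹ ((g : Equiv.Perm (List (Fin d))) w) := by
          rw [h1]; rfl
      _ = w := Equiv.symm_apply_apply _ _

/-- The conjugate `g_i = r^{a^i} = a^{-i} r a^i` in `Γ_d`. -/
def gG (i : ℕ) : ↥(Gamma d) := (aG d ^ i)⁻¹ * rG d * aG d ^ i

end FG

open scoped commutatorElement

/-! The rotation at the root and the sum of the rotations at the first-level vertices, read
in `ℤ/d`, are homomorphisms `φ, ψ : Γ_d → ℤ/d` with `φ a = ψ r = 1` and `φ r = ψ a = 0`. Since
`Γ_d` is generated by `a` and `r`, which have order `d`, its abelianization is a quotient of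
`(ℤ/d)²`, hence `Γ_d' = ker φ ⊓ ker ψ`. Then `Stab(1) = ker φ`, and `ψ` maps `⟨r⟩ ≤ ker φ`
isomorphically onto `ℤ/d`, which splits `Stab(1)` over `Γ_d'`. Modulo the normal closure of
`⁅a, r⁆` the two generators commute, so that normal closure already contains `Γ_d'`. -/

section TwoGenerated

open Subgroup Multiplicative

variable {G : Type*} [Group G]

theorem commutator_le_normalClosure_commutatorElement {a b : G} (hab : closure {a, b} = ⊤) :
    commutator G ≤ normalClosure {⁅a, b⁆} := by
  set N := normalClosure ({⁅a, b⁆} : Set G)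
  let π := QuotientGroup.mk' N
  have hcomm : π a * π b = π b * π a := by
    rw [← commutatorElement_eq_one_iff_mul_comm, ← map_commutatorElement, ← MonoidHom.mem_ker,
      QuotientGroup.ker_mk']
    exact subset_normalClosure rfl
  have : IsMulCommutative (closure {π a, π b}) := isMulCommutative_closure <| by
    simp only [Set.mem_insert_iff, Set.mem_singleton_iff]
    rintro x (rfl | rfl) y (rfl | rfl) <;> first | rfl | exact hcomm | exact hcomm.symm
  have hmem (g : G) : π g ∈ closure {π a, π b} := by
    rw [← Set.image_pair, ← MonoidHom.map_closure, hab]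
    exact mem_map_of_mem _ (mem_top g)
  rw [commutator_def, commutator_le]
  intro g _ h _
  rw [← QuotientGroup.ker_mk' N, MonoidHom.mem_ker, map_commutatorElement,
    commutatorElement_eq_one_iff_mul_comm]
  exact setLike_mul_comm (hmem g) (hmem h)

theorem commutator_eq_normalClosure_commutatorElement {a b : G} (hab : closure {a, b} = ⊤) :
    commutator G = normalClosure {⁅a, b⁆} :=
  (commutator_le_normalClosure_commutatorElement hab).antisymm <|
    normalClosure_le_normal <| Set.singleton_subset_iff.mpr <|
      commutator_mem_commutator (mem_top a) (mem_top b)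

variable {d : ℕ}

theorem zpow_eq_one_of_intCast_eq_zero {x : G} (hx : x ^ d = 1) {k : ℤ} (hk : (k : ZMod d) = 0) :
    x ^ k = 1 :=
  orderOf_dvd_iff_zpow_eq_one.mp <|
    (Int.natCast_dvd_natCast.mpr (orderOf_dvd_of_pow_eq_one hx)).trans
      ((ZMod.intCast_zmod_eq_zero_iff_dvd k d).mp hk)

theorem ofAdd_one_zpow (k : ℤ) : ofAdd (1 : ZMod d) ^ k = ofAdd (k : ZMod d) := by
  rw [← ofAdd_zsmul, zsmul_one]

theorem commutator_eq_ker_inf_ker {a r : G} (hgen : closure {a, r} = ⊤) (ha : a ^ d = 1)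
    (hr : r ^ d = 1) (φ ψ : G →* Multiplicative (ZMod d)) (hφa : φ a = ofAdd 1) (hφr : φ r = 1)
    (hψa : ψ a = 1) (hψr : ψ r = ofAdd 1) :
    commutator G = φ.ker ⊓ ψ.ker := by
  refine le_antisymm (le_inf (Abelianization.commutator_subset_ker φ)
    (Abelianization.commutator_subset_ker ψ)) ?_
  intro g hg
  obtain ⟨hφg, hψg⟩ := mem_inf.mp hg
  rw [MonoidHom.mem_ker] at hφg hψg
  have hof : Abelianization.of g ∈ closure {Abelianization.of a, Abelianization.of r} := by
    rw [← Set.image_pair, ← MonoidHom.map_closure, hgen]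
    exact mem_map_of_mem _ (mem_top g)
  obtain ⟨m, n, hmn⟩ := mem_closure_pair.mp hof
  have hm : a ^ m = 1 := by
    refine zpow_eq_one_of_intCast_eq_zero ha (ofAdd.injective ?_)
    simpa [← ofAdd_one_zpow, hφa, hφr, hφg] using congrArg (Abelianization.lift φ) hmn
  have hn : r ^ n = 1 := by
    refine zpow_eq_one_of_intCast_eq_zero hr (ofAdd.injective ?_)
    simpa [← ofAdd_one_zpow, hψa, hψr, hψg] using congrArg (Abelianization.lift ψ) hmn
  rw [← Abelianization.ker_of, MonoidHom.mem_ker, ← hmn, ← map_zpow, ← map_zpow, hm, hn,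
    map_one, one_mul]

theorem relIndex_ker_inf_ker {r : G} (φ ψ : G →* Multiplicative (ZMod d))
    (hφr : φ r = 1) (hψr : ψ r = ofAdd 1) :
    (φ.ker ⊓ ψ.ker).relIndex φ.ker = d := by
  have hsurj : Function.Surjective (ψ.domRestrict φ.ker) := by
    intro x
    obtain ⟨k, hk⟩ := ZMod.intCast_surjective (toAdd x)
    refine ⟨⟨r ^ k, zpow_mem hφr k⟩, ?_⟩
    simp [hψr, ofAdd_one_zpow, hk]
  rw [inf_relIndex_left, relIndex, ← MonoidHom.ker_domRestrict, index_ker,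
    MonoidHom.range_eq_top.mpr hsurj, card_top, Nat.card_congr toAdd, Nat.card_zmod]

theorem ker_inf_zpowers_eq_bot {r : G} (hr : r ^ d = 1) (ψ : G →* Multiplicative (ZMod d))
    (hψr : ψ r = ofAdd 1) :
    ψ.ker ⊓ zpowers r = ⊥ := by
  refine eq_bot_iff.mpr fun g hg => ?_
  obtain ⟨hψg, hrg⟩ := mem_inf.mp hg
  obtain ⟨k, rfl⟩ := mem_zpowers_iff.mp hrg
  refine zpow_eq_one_of_intCast_eq_zero hr (ofAdd.injective ?_)
  rwa [MonoidHom.mem_ker, map_zpow, hψr, ofAdd_one_zpow] at hψg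

theorem ker_inf_ker_sup_zpowers {r : G} (φ ψ : G →* Multiplicative (ZMod d)) (hφr : φ r = 1)
    (hψr : ψ r = ofAdd 1) :
    φ.ker ⊓ ψ.ker ⊔ zpowers r = φ.ker := by
  refine le_antisymm (sup_le inf_le_left (zpowers_le.mpr hφr)) fun g hφg => ?_
  obtain ⟨k, hk⟩ := ZMod.intCast_surjective (toAdd (ψ g))
  have hker : g * (r ^ k)⁻¹ ∈ φ.ker ⊓ ψ.ker := by
    refine mem_inf.mpr ⟨mul_mem hφg (inv_mem (zpow_mem hφr k)), ?_⟩
    rw [MonoidHom.mem_ker, map_mul, map_inv, map_zpow, hψr, ofAdd_one_zpow, hk, ofAdd_toAdd,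
      mul_inv_cancel]
  simpa using mul_mem (mem_sup_left hker) (mem_sup_right (zpow_mem_zpowers r k))

end TwoGenerated

namespace FG

open Subgroup Multiplicative

variable {d : ℕ} [NeZero d]

lemma aPerm_apply (w : List (Fin d)) : aPerm d w = aFun d w := rfl

lemma rPerm_apply (w : List (Fin d)) : rPerm d w = rFun d w := rfl

lemma rFun_singleton (x : Fin d) : rFun d [x] = [x] := by
  unfold rFun
  split_ifs with h0 <;> simp [aFun, rFun, h0]

lemma rFun_pair (x y : Fin d) : rFun d [x, y] = [x, y + if x = 0 then 1 else 0] := by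
  unfold rFun
  split_ifs with h0 h1 <;> simp [aFun, rFun_singleton, h0]

variable (d) in
def twoLevelTranslations : Subgroup (Equiv.Perm (List (Fin d))) where
  carrier := {g | ∃ s : Fin d, ∃ t : Fin d → Fin d,
    (∀ x, g [x] = [x + s]) ∧ ∀ x y, g [x, y] = [x + s, y + t x]}
  one_mem' := ⟨0, fun _ => 0, fun _ => by simp, fun _ _ => by simp⟩
  mul_mem' := by
    rintro f g ⟨s, t, hf₁, hf₂⟩ ⟨s', t', hg₁, hg₂⟩
    refine ⟨s' + s, fun x => t' x + t (x + s'), fun x => ?_, fun x y => ?_⟩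
    · rw [Equiv.Perm.mul_apply, hg₁, hf₁, add_assoc]
    · rw [Equiv.Perm.mul_apply, hg₂, hf₂, add_assoc, add_assoc]
  inv_mem' := by
    rintro g ⟨s, t, hg₁, hg₂⟩
    refine ⟨-s, fun x => -t (x + -s), fun x => ?_, fun x y => ?_⟩
    · rw [Equiv.Perm.inv_eq_iff_eq, hg₁, neg_add_cancel_right]
    · rw [Equiv.Perm.inv_eq_iff_eq, hg₂, neg_add_cancel_right, neg_add_cancel_right]

lemma gamma_le_twoLevelTranslations : Gamma d ≤ twoLevelTranslations d := by
  refine closure_le _ |>.mpr ?_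
  rintro g (rfl | rfl)
  · exact ⟨1, fun _ => 0, fun _ => rfl, fun _ _ => by simp [aPerm_apply, aFun]⟩
  · refine ⟨0, fun x => if x = 0 then 1 else 0, fun x => ?_, fun x y => ?_⟩
    · rw [add_zero, rPerm_apply, rFun_singleton]
    · rw [add_zero, rPerm_apply, rFun_pair]

def rootShift (g : Equiv.Perm (List (Fin d))) : Fin d := (g [0]).headI

def levelOneShift (g : Equiv.Perm (List (Fin d))) (x : Fin d) : Fin d := (g [x, 0]).tail.headI

section TwoLevelTranslations

variable {g h : Equiv.Perm (List (Fin d))}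

lemma apply_singleton_of_mem (hg : g ∈ twoLevelTranslations d) (x : Fin d) :
    g [x] = [x + rootShift g] := by
  obtain ⟨s, t, hg₁, -⟩ := hg
  rw [rootShift, hg₁, hg₁, List.headI_cons, zero_add]

lemma apply_pair_of_mem (hg : g ∈ twoLevelTranslations d) (x y : Fin d) :
    g [x, y] = [x + rootShift g, y + levelOneShift g x] := by
  obtain ⟨s, t, hg₁, hg₂⟩ := hg
  rw [rootShift, levelOneShift, hg₁, hg₂, hg₂, List.headI_cons, List.tail_cons, List.headI_cons,
    zero_add, zero_add]

lemma rootShift_mul (hg : g ∈ twoLevelTranslations d) (hh : h ∈ twoLevelTranslations d) :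
    rootShift (g * h) = rootShift h + rootShift g := by
  change ((g * h) [0]).headI = _
  rw [Equiv.Perm.mul_apply, apply_singleton_of_mem hh, apply_singleton_of_mem hg, List.headI_cons,
    zero_add]

lemma levelOneShift_mul (hg : g ∈ twoLevelTranslations d) (hh : h ∈ twoLevelTranslations d)
    (x : Fin d) :
    levelOneShift (g * h) x = levelOneShift h x + levelOneShift g (x + rootShift h) := by
  change ((g * h) [x, 0]).tail.headI = _
  rw [Equiv.Perm.mul_apply, apply_pair_of_mem hh, apply_pair_of_mem hg, List.tail_cons,
    List.headI_cons, zero_add]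

lemma sum_levelOneShift_mul (hg : g ∈ twoLevelTranslations d) (hh : h ∈ twoLevelTranslations d) :
    ∑ x, levelOneShift (g * h) x = ∑ x, levelOneShift g x + ∑ x, levelOneShift h x := by
  rw [Finset.sum_congr rfl fun x _ => levelOneShift_mul hg hh x, Finset.sum_add_distrib, add_comm,
    Fintype.sum_equiv (Equiv.addRight (rootShift h)) (fun x => levelOneShift g (x + rootShift h))
      (levelOneShift g) fun _ => rfl]

end TwoLevelTranslations

variable (d) in
def rootShiftHom : ↥(Gamma d) →* Multiplicative (ZMod d) where
  toFun g := ofAdd (ZMod.finEquiv d (rootShift g))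
  map_one' := by simp [rootShift]
  map_mul' g h := by
    rw [coe_mul, rootShift_mul (gamma_le_twoLevelTranslations g.2)
      (gamma_le_twoLevelTranslations h.2), map_add, ofAdd_add, mul_comm]

variable (d) in
def shiftSumHom : ↥(Gamma d) →* Multiplicative (ZMod d) where
  toFun g := ofAdd (ZMod.finEquiv d (∑ x, levelOneShift g x))
  map_one' := by simp [levelOneShift]
  map_mul' g h := by
    rw [coe_mul, sum_levelOneShift_mul (gamma_le_twoLevelTranslations g.2)
      (gamma_le_twoLevelTranslations h.2), map_add, ofAdd_add]

lemma rootShiftHom_aG : rootShiftHom d (aG d) = ofAdd 1 := by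
  simp [rootShiftHom, rootShift, aG, aPerm_apply, aFun]

lemma rootShiftHom_rG : rootShiftHom d (rG d) = 1 := by
  simp [rootShiftHom, rootShift, rG, rPerm_apply, rFun_singleton]

lemma shiftSumHom_aG : shiftSumHom d (aG d) = 1 := by
  simp [shiftSumHom, levelOneShift, aG, aPerm_apply, aFun]

lemma shiftSumHom_rG : shiftSumHom d (rG d) = ofAdd 1 := by
  have hshift (x : Fin d) : levelOneShift (rPerm d) x = if x = 0 then 1 else 0 := by
    simp [levelOneShift, rPerm_apply, rFun_pair]
  change ofAdd (ZMod.finEquiv d (∑ x, levelOneShift (rPerm d) x)) = _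
  simp [hshift]

lemma stab_one_eq_ker_rootShiftHom : Stab d 1 = (rootShiftHom d).ker := by
  ext g
  rw [MonoidHom.mem_ker]
  change (∀ w : List (Fin d), w.length = 1 → g.1 w = w) ↔ _
  simp [rootShiftHom, List.length_eq_one_iff,
    apply_singleton_of_mem (gamma_le_twoLevelTranslations g.2)]

lemma aPerm_pow_apply_cons (n : ℕ) (x : Fin d) (w : List (Fin d)) :
    (aPerm d ^ n) (x :: w) = (x + n • 1) :: w := by
  induction n with
  | zero => simp
  | succ n ih => rw [pow_succ', Equiv.Perm.mul_apply, ih, aPerm_apply, aFun, succ_nsmul, add_assoc]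

lemma aPerm_pow_card : aPerm d ^ d = 1 := by
  ext1 w
  cases w with
  | nil => exact Equiv.Perm.pow_apply_eq_self_of_apply_eq_self rfl d
  | cons x w =>
    rw [aPerm_pow_apply_cons, Equiv.Perm.one_apply]
    simpa using card_nsmul_eq_zero (x := (1 : Fin d))

lemma rPerm_pow_apply_cons (n : ℕ) (x : Fin d) (w : List (Fin d)) :
    (rPerm d ^ n) (x :: w) =
      if x = 0 then x :: (aPerm d ^ n) w else if x = -1 then x :: (rPerm d ^ n) w else x :: w := by
  induction n with
  | zero => split_ifs <;> rfl
  | succ n ih =>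
    rw [pow_succ', Equiv.Perm.mul_apply, ih, rPerm_apply]
    split_ifs with h0 h1 <;> simp only [rFun, pow_succ', Equiv.Perm.mul_apply]
    · rw [if_pos h0, aPerm_apply]
    · rw [if_neg h0, if_pos h1, rPerm_apply]
    · rw [if_neg h0, if_neg h1]

lemma rPerm_pow_card : rPerm d ^ d = 1 := by
  ext1 w
  induction w with
  | nil => exact Equiv.Perm.pow_apply_eq_self_of_apply_eq_self rfl d
  | cons x w ih => rw [rPerm_pow_apply_cons]; split_ifs <;> simp [aPerm_pow_card, ih]

lemma aG_pow_card : aG d ^ d = 1 := Subtype.ext aPerm_pow_card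

lemma rG_pow_card : rG d ^ d = 1 := Subtype.ext rPerm_pow_card

lemma closure_aG_rG_eq_top : closure {aG d, rG d} = ⊤ := by
  refine (congrArg Subgroup.closure ?_).trans
    (closure_closure_coe_preimage (k := {aPerm d, rPerm d}))
  ext g
  simp only [aG, rG, Set.mem_insert_iff, Subtype.ext_iff, Set.mem_singleton_iff]
  rfl

end FG

theorem stmt_3_general (d : ℕ) [NeZero d] :
    commutator ↥(FG.Gamma d) = Subgroup.normalClosure {⁅FG.aG d, FG.rG d⁆} ∧
    commutator ↥(FG.Gamma d) ≤ FG.Stab d 1 ∧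
    (commutator ↥(FG.Gamma d)).relIndex (FG.Stab d 1) = d ∧
    commutator ↥(FG.Gamma d) ⊓ Subgroup.zpowers (FG.rG d) = ⊥ ∧
    commutator ↥(FG.Gamma d) ⊔ Subgroup.zpowers (FG.rG d) = FG.Stab d 1 := by
  have hgen := FG.closure_aG_rG_eq_top (d := d)
  have hcomm := commutator_eq_ker_inf_ker hgen FG.aG_pow_card FG.rG_pow_card _ _
    FG.rootShiftHom_aG FG.rootShiftHom_rG FG.shiftSumHom_aG FG.shiftSumHom_rG
  rw [FG.stab_one_eq_ker_rootShiftHom]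
  refine ⟨commutator_eq_normalClosure_commutatorElement hgen, ?_, ?_, ?_, ?_⟩ <;> rw [hcomm]
  · exact inf_le_left
  · exact relIndex_ker_inf_ker _ _ FG.rootShiftHom_rG FG.shiftSumHom_rG
  · exact eq_bot_mono (inf_le_inf_right _ inf_le_right)
      (ker_inf_zpowers_eq_bot FG.rG_pow_card _ FG.shiftSumHom_rG)
  · exact ker_inf_ker_sup_zpowers _ _ FG.rootShiftHom_rG FG.shiftSumHom_rG

/-- For every `d ≥ 3`: the derived subgroup `Γ_d'` is the normal closure of the commutator
of `a` and `r`, it is contained in `Stab(1)` with index `d` there, and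
`Stab(1) = Γ_d' ⋊ ⟨r⟩`. -/
theorem stmt_3 (d : ℕ) [NeZero d] (hd : 3 ≤ d) :
    commutator ↥(FG.Gamma d) = Subgroup.normalClosure {⁅FG.aG d, FG.rG d⁆} ∧
    commutator ↥(FG.Gamma d) ≤ FG.Stab d 1 ∧
    (commutator ↥(FG.Gamma d)).relIndex (FG.Stab d 1) = d ∧
    commutator ↥(FG.Gamma d) ⊓ Subgroup.zpowers (FG.rG d) = ⊥ ∧
    commutator ↥(FG.Gamma d) ⊔ Subgroup.zpowers (FG.rG d) = FG.Stab d 1 :=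
  stmt_3_general d
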